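/- Let G be a group and x_1, ..., x_n elements of G such that x_i and x_j commute whenever j - i ≥ 2. If (y_1, ..., y_n) is any permutation of the tuple (x_1, ..., x_n), then there exists an element u in the subgroup of G generated by x_1, ..., x_{n-1} such that u * (y_1 * ... * y_n) * u⁻¹ = x_1 * ... * x_n. -/

import Mathlib

/-!
Induction on `n`. In any rearrangement of `x₁, …, xₙ` write the word as `A xₙ B`. Conjugating
by `B`, a product of `x₁, …, xₙ₋₁`, rotates it to `B A xₙ`, and `B A` is a rearrangement of
`x₁, …, xₙ₋₁`, so by induction some `u'` in `⟨x₁, …, xₙ₋₂⟩` conjugates `B A` to `x₁ ⋯ xₙ₋₁`.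
This `u'` commutes with `xₙ`, hence `u = u' B` conjugates `A xₙ B` to `x₁ ⋯ xₙ`.
-/

section

open Subgroup List

variable {G : Type*} [Group G]

theorem List.perm_of_append_cons_perm_append_singleton {α : Type*} {A B L : List α} {t : α}
    (h : A ++ t :: B ~ L ++ [t]) : B ++ A ~ L :=
  perm_append_comm.trans <| (perm_cons t).mp <|
    perm_middle.symm.trans <| h.trans (perm_append_singleton t L)

theorem List.conj_prod_append_cons (A B : List G) (t : G) :
    B.prod * (A ++ t :: B).prod * B.prod⁻¹ = (B ++ A).prod * t := by
  simp [mul_assoc]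

theorem Subgroup.commute_of_mem_closure {S : Set G} {t u : G} (hS : ∀ g ∈ S, Commute g t)
    (hu : u ∈ closure S) : Commute u t := by
  have hle : closure S ≤ centralizer {t} :=
    (closure_le _).mpr fun g hg => mem_centralizer_singleton_iff.mpr (hS g hg).eq
  exact mem_centralizer_singleton_iff.mp (hle hu)

theorem exists_mem_closure_conj_prod_eq_of_perm :
    ∀ {n : ℕ} (x : Fin n → G), (∀ i j : Fin n, (i : ℕ) + 2 ≤ (j : ℕ) → Commute (x i) (x j)) →
    ∀ {l : List G}, l ~ ofFn x →
      ∃ u ∈ closure {g : G | ∃ i : Fin n, (i : ℕ) + 1 < n ∧ g = x i},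
        u * l.prod * u⁻¹ = (ofFn x).prod
  | 0, x, _, l, hl => ⟨1, one_mem _, by simp [ofFn_zero ▸ hl |>.eq_nil]⟩
  | n + 1, x, hcomm, l, hl => by
    set t := x (Fin.last n)
    have hsplit : ofFn x = ofFn (fun i : Fin n => x i.castSucc) ++ [t] := by
      rw [ofFn_succ', concat_eq_append]
    have ht : t ∈ l := hl.mem_iff.mpr (mem_ofFn.mpr ⟨_, rfl⟩)
    obtain ⟨A, B, rfl⟩ := append_of_mem ht
    have hBA := perm_of_append_cons_perm_append_singleton (hsplit ▸ hl)
    obtain ⟨u', hu', hconj⟩ := exists_mem_closure_conj_prod_eq_of_perm _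
      (fun i j hij => hcomm i.castSucc j.castSucc hij) hBA
    have hu't : Commute u' t := commute_of_mem_closure (by
      rintro _ ⟨i, hi, rfl⟩
      exact hcomm _ _ (by simp only [Fin.val_castSucc, Fin.val_last]; omega)) hu'
    have hgens : ∀ g ∈ ofFn (fun i : Fin n => x i.castSucc),
        g ∈ {g : G | ∃ i : Fin (n + 1), (i : ℕ) + 1 < n + 1 ∧ g = x i} := by
      intro g hg
      obtain ⟨i, rfl⟩ := mem_ofFn.mp hg
      exact ⟨i.castSucc, by simp, rfl⟩
    refine ⟨u' * B.prod, mul_mem (closure_mono ?_ hu') ?_, ?_⟩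
    · rintro _ ⟨i, hi, rfl⟩
      exact ⟨i.castSucc, by simp [hi.trans n.lt_succ_self], rfl⟩
    · exact list_prod_mem fun g hg =>
        subset_closure (hgens g (hBA.mem_iff.mp (mem_append_left A hg)))
    · calc u' * B.prod * (A ++ t :: B).prod * (u' * B.prod)⁻¹
            = u' * (B.prod * (A ++ t :: B).prod * B.prod⁻¹) * u'⁻¹ := by group
          _ = u' * (B ++ A).prod * u'⁻¹ * t := by
            rw [conj_prod_append_cons]
            simp only [mul_assoc, hu't.inv_left.eq]
          _ = (ofFn x).prod := by rw [hconj, hsplit, prod_append, prod_singleton]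

end

theorem stmt0 {G : Type*} [Group G] (n : ℕ) (x : Fin n → G)
    (hcomm : ∀ i j : Fin n, (i : ℕ) + 2 ≤ (j : ℕ) → Commute (x i) (x j))
    (σ : Equiv.Perm (Fin n)) :
    ∃ u ∈ Subgroup.closure {g : G | ∃ i : Fin n, (i : ℕ) + 1 < n ∧ g = x i},
      u * (List.ofFn fun k => x (σ k)).prod * u⁻¹ = (List.ofFn x).prod :=
  exists_mem_closure_conj_prod_eq_of_perm x hcomm (σ.ofFn_comp_perm x)
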